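/- Let R satisfy R^T k ≠ 0 for all nonzero k ∈ ℤ^m, 1 < p < ∞. Suppose u_η two-scale cut-and-projection converges weakly to u₀, the limit u₀ belongs to L^p(Ω; C_♯(Y^m)), and ‖u_η‖_{L^p(Ω)} → ‖u₀‖_{L^p(Ω×Y^m)} as well as ‖u₀(·, R·/η)‖_{L^p(Ω)} → ‖u₀‖_{L^p(Ω×Y^m)}. Then ‖u_η − u₀(·, R·/η)‖_{L^p(Ω)} → 0 as η → 0. -/

import Mathlib

open MeasureTheory Filter Topology Matrix

noncomputable section

/-- The open unit cube `Y^m = (0,1)^m`. -/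
def cube (m : ℕ) : Set (Fin m → ℝ) := Set.univ.pi fun _ => Set.Ioo (0:ℝ) 1

/-- `Y^m`-periodicity: invariance under integer translations. -/
def Zper {m : ℕ} {α : Type*} (g : (Fin m → ℝ) → α) : Prop :=
  ∀ (k : Fin m → ℤ) (y : Fin m → ℝ), g (y + fun i => (k i : ℝ)) = g y

/-- Cut-and-projection irrationality condition: `Rᵀ k ≠ 0` for nonzero integer `k`. -/
def Irr {m n : ℕ} (R : Matrix (Fin m) (Fin n) ℝ) : Prop :=
  ∀ k : Fin m → ℤ, k ≠ 0 → R.transpose.mulVec (fun i => (k i : ℝ)) ≠ 0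

/-- Admissible test functions: `φ ∈ L^q(Ω; C_♯(Y^m))`. -/
def TestFun {n m : ℕ} (q : ℝ) (Ω : Set (Fin n → ℝ))
    (φ : (Fin n → ℝ) → (Fin m → ℝ) → ℝ) : Prop :=
  (∀ x, Continuous (φ x)) ∧ (∀ x, Zper (φ x)) ∧
  (∀ y, AEMeasurable (fun x => φ x y) (volume.restrict Ω)) ∧
  Integrable (fun x => (⨆ y, |φ x y|) ^ q) (volume.restrict Ω)

/-- Weak two-scale cut-and-projection convergence along a sequence of scales `η`. -/
def WeakTwoScale {n m : ℕ} (q : ℝ) (Ω : Set (Fin n → ℝ)) (R : Matrix (Fin m) (Fin n) ℝ)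
    (η : ℕ → ℝ) (u : ℕ → (Fin n → ℝ) → ℝ)
    (u₀ : (Fin n → ℝ) → (Fin m → ℝ) → ℝ) : Prop :=
  ∀ φ : (Fin n → ℝ) → (Fin m → ℝ) → ℝ, TestFun q Ω φ →
    Tendsto (fun k => ∫ x in Ω, u k x * φ x ((η k)⁻¹ • R.mulVec x)) atTop
      (𝓝 (∫ x in Ω, ∫ y in cube m, u₀ x y * φ x y))

/-- Classical gradient on `ℝ^m`. -/
def gradY {m : ℕ} (θ : (Fin m → ℝ) → ℝ) (y : Fin m → ℝ) : Fin m → ℝ :=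
  fun j => fderiv ℝ θ y (Pi.single j 1)

/-- The projected gradient `grad_R θ = Rᵀ ∇_y θ`. -/
def gradR {m n : ℕ} (R : Matrix (Fin m) (Fin n) ℝ) (θ : (Fin m → ℝ) → ℝ)
    (y : Fin m → ℝ) : Fin n → ℝ :=
  R.transpose.mulVec (gradY θ y)

/-- The projected divergence `div_R φ = (Rᵀ ∇_y) · φ`. -/
def divR {m n : ℕ} (R : Matrix (Fin m) (Fin n) ℝ) (φ : (Fin m → ℝ) → Fin n → ℝ)
    (y : Fin m → ℝ) : ℝ :=
  ∑ i, gradR R (fun z => φ z i) y i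

/-- `G` is the weak periodic cut-and-projection gradient `grad_R θ`. -/
def IsWeakGradR {m n : ℕ} (R : Matrix (Fin m) (Fin n) ℝ) (θ : (Fin m → ℝ) → ℝ)
    (G : (Fin m → ℝ) → Fin n → ℝ) : Prop :=
  ∀ ψ : (Fin m → ℝ) → Fin n → ℝ, ContDiff ℝ (⊤ : ℕ∞) ψ → (∀ i, Zper fun y => ψ y i) →
    ∫ y in cube m, θ y * divR R ψ y = - ∫ y in cube m, G y ⬝ᵥ ψ y

/-- `d` is the weak periodic cut-and-projection divergence `div_R φ`. -/
def IsWeakDivR {m n : ℕ} (R : Matrix (Fin m) (Fin n) ℝ) (φ : (Fin m → ℝ) → Fin n → ℝ)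
    (d : (Fin m → ℝ) → ℝ) : Prop :=
  ∀ ψ : (Fin m → ℝ) → ℝ, ContDiff ℝ (⊤ : ℕ∞) ψ → Zper ψ →
    ∫ y in cube m, φ y ⬝ᵥ gradR R ψ y = - ∫ y in cube m, d y * ψ y

/-- `G` is the weak (full) periodic gradient `∇_y θ`. -/
def IsWeakGrad {m : ℕ} (θ : (Fin m → ℝ) → ℝ) (G : (Fin m → ℝ) → Fin m → ℝ) : Prop :=
  ∀ ψ : (Fin m → ℝ) → ℝ, ContDiff ℝ (⊤ : ℕ∞) ψ → Zper ψ → ∀ j,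
    ∫ y in cube m, θ y * gradY ψ y j = - ∫ y in cube m, G y j * ψ y

/-- `G` is the weak gradient of `u` on `Ω`. -/
def IsWeakGradOn {n : ℕ} (Ω : Set (Fin n → ℝ)) (u : (Fin n → ℝ) → ℝ)
    (G : (Fin n → ℝ) → Fin n → ℝ) : Prop :=
  ∀ ψ : (Fin n → ℝ) → ℝ, ContDiff ℝ (⊤ : ℕ∞) ψ → HasCompactSupport ψ → tsupport ψ ⊆ Ω → ∀ j,
    ∫ x in Ω, u x * fderiv ℝ ψ x (Pi.single j 1) = - ∫ x in Ω, G x j * ψ x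

/-- `d` is the weak divergence of `v` on `Ω`. -/
def IsWeakDivOn {n : ℕ} (Ω : Set (Fin n → ℝ)) (v : (Fin n → ℝ) → Fin n → ℝ)
    (d : (Fin n → ℝ) → ℝ) : Prop :=
  ∀ ψ : (Fin n → ℝ) → ℝ, ContDiff ℝ (⊤ : ℕ∞) ψ → HasCompactSupport ψ → tsupport ψ ⊆ Ω →
    ∫ x in Ω, v x ⬝ᵥ (fun j => fderiv ℝ ψ x (Pi.single j 1)) = - ∫ x in Ω, d x * ψ x

/-- Membership in `W_0^{1,p}(Ω)` with weak gradient `G`. -/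
def MemW1p0 {n : ℕ} (p : ℝ) (Ω : Set (Fin n → ℝ)) (u : (Fin n → ℝ) → ℝ)
    (G : (Fin n → ℝ) → Fin n → ℝ) : Prop :=
  Integrable (fun x => |u x| ^ p) (volume.restrict Ω) ∧
  Integrable (fun x => ‖G x‖ ^ p) (volume.restrict Ω) ∧
  IsWeakGradOn Ω u G ∧
  ∃ v : ℕ → (Fin n → ℝ) → ℝ,
    (∀ j, ContDiff ℝ (⊤ : ℕ∞) (v j) ∧ HasCompactSupport (v j) ∧ tsupport (v j) ⊆ Ω) ∧
    Tendsto (fun j => (∫ x in Ω, |v j x - u x| ^ p) +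
      ∫ x in Ω, ‖(fun i => fderiv ℝ (v j) x (Pi.single i 1)) - G x‖ ^ p) atTop (𝓝 0)


/-!
Write `v_η(x) = u₀(x, R x / η)`. Testing the weak two-scale convergence against
`φ(x, y) = sign u₀(x, y) |u₀(x, y)|^(p-1)`, which is admissible because `u₀(x, ·)` is continuous
and periodic, gives `∫ u_η φ(·, R·/η) → ‖u₀‖_p^p`. Together with the two norm convergences, the
integral of the Bregman divergence of `|·|^p` between `u_η` and `v_η`,
`|u_η|^p - |v_η|^p - p sign v_η |v_η|^(p-1) (u_η - v_η)`, tends to `0`. By `p`-homogeneity and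
compactness, this divergence dominates `|a - b|^p - ε (|a|^p + |b|^p)` up to a constant for every
`ε > 0`, so `‖u_η - v_η‖_p → 0`.
-/

/-- The odd extension of `t ↦ t ^ r`, i.e. `sign t * |t| ^ r`. -/
def signedRpow (r t : ℝ) : ℝ := max t 0 ^ r - max (-t) 0 ^ r

section signedRpow

variable {r : ℝ}

lemma signedRpow_of_nonneg (hr : r ≠ 0) {t : ℝ} (ht : 0 ≤ t) : signedRpow r t = t ^ r := by
  rw [signedRpow, max_eq_left ht, max_eq_right (neg_nonpos.2 ht), Real.zero_rpow hr, sub_zero]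

lemma signedRpow_neg (r t : ℝ) : signedRpow r (-t) = -signedRpow r t := by
  rw [signedRpow, signedRpow, neg_neg, neg_sub]

lemma abs_signedRpow (hr : r ≠ 0) (t : ℝ) : |signedRpow r t| = |t| ^ r := by
  rcases le_total 0 t with ht | ht
  · rw [signedRpow_of_nonneg hr ht, abs_of_nonneg ht, abs_of_nonneg (Real.rpow_nonneg ht r)]
  · obtain ⟨s, hs, rfl⟩ : ∃ s, 0 ≤ s ∧ t = -s := ⟨-t, by linarith, by ring⟩
    rw [signedRpow_neg, abs_neg, abs_neg, signedRpow_of_nonneg hr hs, abs_of_nonneg hs,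
      abs_of_nonneg (Real.rpow_nonneg hs r)]

lemma signedRpow_mul_self (hr : 0 < r) (t : ℝ) : signedRpow r t * t = |t| ^ (r + 1) := by
  have hr1 : r + 1 ≠ 0 := by positivity
  rcases le_total 0 t with ht | ht
  · rw [signedRpow_of_nonneg hr.ne' ht, abs_of_nonneg ht, Real.rpow_add_one' ht hr1]
  · obtain ⟨s, hs, rfl⟩ : ∃ s, 0 ≤ s ∧ t = -s := ⟨-t, by linarith, by ring⟩
    rw [signedRpow_neg, abs_neg, signedRpow_of_nonneg hr.ne' hs, abs_of_nonneg hs,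
      Real.rpow_add_one' hs hr1, neg_mul_neg]

lemma signedRpow_mul (hr : r ≠ 0) {c : ℝ} (hc : 0 ≤ c) (t : ℝ) :
    signedRpow r (c * t) = c ^ r * signedRpow r t := by
  rcases le_total 0 t with ht | ht
  · rw [signedRpow_of_nonneg hr ht, signedRpow_of_nonneg hr (mul_nonneg hc ht),
      Real.mul_rpow hc ht]
  · obtain ⟨s, hs, rfl⟩ : ∃ s, 0 ≤ s ∧ t = -s := ⟨-t, by linarith, by ring⟩
    rw [mul_neg, signedRpow_neg, signedRpow_neg, signedRpow_of_nonneg hr hs,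
      signedRpow_of_nonneg hr (mul_nonneg hc hs), Real.mul_rpow hc hs, mul_neg]

lemma signedRpow_mul_le_abs_mul (hr : r ≠ 0) (a b : ℝ) : signedRpow r b * a ≤ |a| * |b| ^ r :=
  calc signedRpow r b * a ≤ |signedRpow r b * a| := le_abs_self _
    _ = |a| * |b| ^ r := by rw [abs_mul, abs_signedRpow hr, mul_comm]

lemma continuous_signedRpow (hr : 0 < r) : Continuous (signedRpow r) :=
  ((continuous_id.max continuous_const).rpow_const fun _ => Or.inr hr.le).sub
    ((continuous_neg.max continuous_const).rpow_const fun _ => Or.inr hr.le)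

end signedRpow

section Young

variable {p : ℝ}

lemma rpow_sub_one_rpow_conjExponent (hp : 1 < p) {y : ℝ} (hy : 0 ≤ y) :
    (y ^ (p - 1)) ^ p.conjExponent = y ^ p := by
  rw [← Real.rpow_mul hy, (Real.HolderConjugate.conjExponent hp).sub_one_mul_conj]

lemma mul_mul_rpow_sub_one_le (hp : 1 < p) {x y : ℝ} (hx : 0 ≤ x) (hy : 0 ≤ y) :
    p * (x * y ^ (p - 1)) ≤ x ^ p + (p - 1) * y ^ p := by
  have hyoung := Real.young_inequality_of_nonneg hx (Real.rpow_nonneg hy (p - 1))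
    (Real.HolderConjugate.conjExponent hp)
  rw [rpow_sub_one_rpow_conjExponent hp hy, Real.conjExponent] at hyoung
  have hp0 : 0 < p := by linarith
  have hp1 : p - 1 ≠ 0 := by linarith
  calc p * (x * y ^ (p - 1)) ≤ p * (x ^ p / p + y ^ p / (p / (p - 1))) := by gcongr
    _ = x ^ p + (p - 1) * y ^ p := by field_simp

lemma eq_of_mul_mul_rpow_sub_one_eq (hp : 1 < p) {x y : ℝ} (hx : 0 ≤ x) (hy : 0 ≤ y)
    (h : p * (x * y ^ (p - 1)) = x ^ p + (p - 1) * y ^ p) : x = y := by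
  have hcj := Real.HolderConjugate.conjExponent hp
  have hp0 : 0 < p := by linarith
  have hp1 : p - 1 ≠ 0 := by linarith
  have hyoung : x * y ^ (p - 1) = x ^ p / p + (y ^ (p - 1)) ^ p.conjExponent / p.conjExponent := by
    rw [rpow_sub_one_rpow_conjExponent hp hy, Real.conjExponent]
    field_simp
    linarith
  rw [Real.young_inequality_eq_iff_of_nonneg hx (Real.rpow_nonneg hy _) hcj,
    rpow_sub_one_rpow_conjExponent hp hy] at hyoung
  exact (Real.rpow_left_inj hx hy hp0.ne').1 hyoung

end Young

lemma le_mul_of_le_mul_on_sphere {E : Type*} [NormedAddCommGroup E] [NormedSpace ℝ E]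
    {g D : E → ℝ} {p C : ℝ} (hp : p ≠ 0) (hg : ∀ {c : ℝ}, 0 ≤ c → ∀ z, g (c • z) = c ^ p * g z)
    (hD : ∀ {c : ℝ}, 0 ≤ c → ∀ z, D (c • z) = c ^ p * D z)
    (h : ∀ z ∈ Metric.sphere (0 : E) 1, g z ≤ C * D z) (z : E) : g z ≤ C * D z := by
  rcases eq_or_ne z 0 with rfl | hz
  · have hzero : ∀ {F : E → ℝ}, (∀ {c : ℝ}, 0 ≤ c → ∀ z, F (c • z) = c ^ p * F z) → F 0 = 0 :=
      fun hF => by simpa [Real.zero_rpow hp] using hF le_rfl (0 : E)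
    rw [hzero hg, hzero hD, mul_zero]
  have hnorm : ‖z‖ ≠ 0 := norm_ne_zero_iff.2 hz
  have hw : ‖z‖⁻¹ • z ∈ Metric.sphere (0 : E) 1 := by
    rw [mem_sphere_zero_iff_norm, norm_smul, norm_inv, norm_norm, inv_mul_cancel₀ hnorm]
  have hz_eq : z = ‖z‖ • (‖z‖⁻¹ • z) := by rw [smul_smul, mul_inv_cancel₀ hnorm, one_smul]
  rw [hz_eq, hg (norm_nonneg z), hD (norm_nonneg z), mul_left_comm]
  exact mul_le_mul_of_nonneg_left (h _ hw) (Real.rpow_nonneg (norm_nonneg z) p)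

/-- The Bregman divergence `|a|^p - |b|^p - f'(b) (a - b)` of `f = |·|^p`,
using `f'(b) = p * signedRpow (p - 1) b` and `f'(b) * b = p * |b|^p`. -/
def bregmanRpow (p a b : ℝ) : ℝ := |a| ^ p + (p - 1) * |b| ^ p - p * (signedRpow (p - 1) b * a)

section bregmanRpow

variable {p : ℝ}

lemma bregmanRpow_nonneg (hp : 1 < p) (a b : ℝ) : 0 ≤ bregmanRpow p a b := by
  have h1 := signedRpow_mul_le_abs_mul (by linarith : p - 1 ≠ 0) a b
  have h2 := mul_mul_rpow_sub_one_le hp (abs_nonneg a) (abs_nonneg b)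
  rw [bregmanRpow]
  nlinarith

lemma bregmanRpow_pos (hp : 1 < p) {a b : ℝ} (hab : a ≠ b) : 0 < bregmanRpow p a b := by
  by_contra hle
  have h1 := signedRpow_mul_le_abs_mul (by linarith : p - 1 ≠ 0) a b
  have h2 := mul_mul_rpow_sub_one_le hp (abs_nonneg a) (abs_nonneg b)
  have habs : |a| = |b| := by
    refine eq_of_mul_mul_rpow_sub_one_eq hp (abs_nonneg a) (abs_nonneg b) ?_
    rw [bregmanRpow] at hle
    nlinarith
  have hba : a = -b := (abs_eq_abs.1 habs).resolve_left hab
  have hbp : 0 < |b| ^ p := by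
    refine Real.rpow_pos_of_pos (abs_pos.2 fun hb => hab ?_) p
    rw [hba, hb, neg_zero]
  have hself := signedRpow_mul_self (by linarith : 0 < p - 1) b
  rw [sub_add_cancel] at hself
  rw [bregmanRpow, hba, abs_neg, mul_neg, hself] at hle
  nlinarith

lemma continuous_bregmanRpow (hp : 1 < p) :
    Continuous fun z : ℝ × ℝ => bregmanRpow p z.1 z.2 := by
  have hsign := continuous_signedRpow (by linarith : 0 < p - 1)
  unfold bregmanRpow
  fun_prop (disch := linarith)

lemma bregmanRpow_mul (hp : 1 < p) {c : ℝ} (hc : 0 ≤ c) (a b : ℝ) :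
    bregmanRpow p (c * a) (c * b) = c ^ p * bregmanRpow p a b := by
  have hcp : c ^ p = c ^ (p - 1) * c := by
    rw [← Real.rpow_add_one' hc (by linarith), sub_add_cancel]
  simp only [bregmanRpow, abs_mul, abs_of_nonneg hc, Real.mul_rpow hc (abs_nonneg _),
    signedRpow_mul (by linarith : p - 1 ≠ 0) hc, hcp]
  ring

/-- Both sides are `p`-homogeneous, so it suffices to compare them on the unit sphere of
`ℝ × ℝ`, where the divergence is bounded below on the compact set on which
`|a - b|^p ≥ ε (|a|^p + |b|^p)`. -/
lemma exists_abs_sub_rpow_le_bregmanRpow (hp : 1 < p) {ε : ℝ} (hε : 0 < ε) :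
    ∃ C, ∀ a b : ℝ, |a - b| ^ p ≤ ε * (|a| ^ p + |b| ^ p) + C * bregmanRpow p a b := by
  have hp0 : 0 < p := by linarith
  set g : ℝ × ℝ → ℝ := fun z => |z.1 - z.2| ^ p - ε * (|z.1| ^ p + |z.2| ^ p) with hg
  set D : ℝ × ℝ → ℝ := fun z => bregmanRpow p z.1 z.2 with hD
  have hg_cont : Continuous g := by
    rw [hg]
    fun_prop (disch := linarith)
  set K := Metric.sphere (0 : ℝ × ℝ) 1 ∩ {z | 0 ≤ g z}
  have hK : IsCompact K := (isCompact_sphere 0 1).inter_right (isClosed_le continuous_const hg_cont)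
  have hD_pos : ∀ z ∈ K, 0 < D z := by
    rintro z ⟨hz1, hz2⟩
    refine bregmanRpow_pos hp fun h => ?_
    rw [mem_sphere_zero_iff_norm, Prod.norm_def, Real.norm_eq_abs, Real.norm_eq_abs, h,
      max_self] at hz1
    simp only [Set.mem_ofPred_eq, hg, h, sub_self, abs_zero, hz1, Real.zero_rpow hp0.ne',
      Real.one_rpow] at hz2
    linarith
  obtain ⟨C, hC⟩ := hK.bddAbove_image
    (hg_cont.continuousOn.div (continuous_bregmanRpow hp).continuousOn fun z hz =>
      (hD_pos z hz).ne')
  have h_sphere : ∀ z ∈ Metric.sphere (0 : ℝ × ℝ) 1, g z ≤ max C 0 * D z := by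
    intro z hz
    have hD0 : 0 ≤ D z := bregmanRpow_nonneg hp _ _
    by_cases hgz : 0 ≤ g z
    · have hle : g z / D z ≤ C := hC ⟨z, ⟨hz, hgz⟩, rfl⟩
      rw [div_le_iff₀ (hD_pos z ⟨hz, hgz⟩)] at hle
      nlinarith [le_max_left C 0]
    · nlinarith [le_max_right C 0]
  have hg_smul : ∀ {c : ℝ}, 0 ≤ c → ∀ z, g (c • z) = c ^ p * g z := by
    intro c hc z
    simp only [hg, Prod.smul_fst, Prod.smul_snd, smul_eq_mul, ← mul_sub, abs_mul,
      abs_of_nonneg hc, Real.mul_rpow hc (abs_nonneg _)]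
    ring
  refine ⟨max C 0, fun a b => ?_⟩
  have := le_mul_of_le_mul_on_sphere hp0.ne' hg_smul
    (fun hc z => bregmanRpow_mul hp hc z.1 z.2) h_sphere (a, b)
  simp only [hg, hD] at this
  linarith

end bregmanRpow

lemma tendsto_zero_of_forall_le_mul_add {ι : Type*} {l : Filter ι} {a b c : ι → ℝ} {B : ℝ}
    (ha : ∀ i, 0 ≤ a i) (hb : Tendsto b l (𝓝 B)) (hc : Tendsto c l (𝓝 0))
    (h : ∀ ε > 0, ∃ C, ∀ i, a i ≤ ε * b i + C * c i) : Tendsto a l (𝓝 0) := by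
  refine tendsto_order.2 ⟨fun δ hδ => Eventually.of_forall fun i => hδ.trans_le (ha i),
    fun δ hδ => ?_⟩
  obtain ⟨C, hC⟩ := h (δ / (2 * (|B| + 1))) (by positivity)
  have hb' : ∀ᶠ i in l, b i < |B| + 1 :=
    hb.eventually (gt_mem_nhds (by linarith [le_abs_self B]))
  have hc' : ∀ᶠ i in l, C * c i < δ / 2 := by
    have := hc.const_mul C
    rw [mul_zero] at this
    exact this.eventually (gt_mem_nhds (by linarith))
  filter_upwards [hb', hc'] with i hbi hci
  have hεb : δ / (2 * (|B| + 1)) * b i ≤ δ / 2 := by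
    calc δ / (2 * (|B| + 1)) * b i ≤ δ / (2 * (|B| + 1)) * (|B| + 1) := by gcongr
      _ = δ / 2 := by field_simp
  linarith [hC i]

section Integral

variable {α : Type*} [MeasurableSpace α] {μ : Measure α} {p : ℝ} {f g : α → ℝ}

lemma integrable_mul_signedRpow (hp : 1 < p) (hf : AEMeasurable f μ) (hg : AEMeasurable g μ)
    (hfp : Integrable (fun x => |f x| ^ p) μ) (hgp : Integrable (fun x => |g x| ^ p) μ) :
    Integrable (fun x => f x * signedRpow (p - 1) (g x)) μ := by
  have hp0 : 0 < p := by linarith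
  refine Integrable.mono' ((hfp.add (hgp.const_mul (p - 1))).div_const p)
    (hf.mul ((continuous_signedRpow (by linarith)).measurable.comp_aemeasurable
      hg)).aestronglyMeasurable
    (Eventually.of_forall fun x => ?_)
  rw [Real.norm_eq_abs, abs_mul, abs_signedRpow (by linarith), le_div_iff₀ hp0, mul_comm]
  exact mul_mul_rpow_sub_one_le hp (abs_nonneg _) (abs_nonneg _)

lemma integrable_bregmanRpow (hp : 1 < p) (hf : AEMeasurable f μ) (hg : AEMeasurable g μ)
    (hfp : Integrable (fun x => |f x| ^ p) μ) (hgp : Integrable (fun x => |g x| ^ p) μ) :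
    Integrable (fun x => bregmanRpow p (f x) (g x)) μ := by
  simp only [bregmanRpow, mul_comm (signedRpow _ _)]
  exact (hfp.add (hgp.const_mul _)).sub ((integrable_mul_signedRpow hp hf hg hfp hgp).const_mul p)

lemma integral_bregmanRpow (hp : 1 < p) (hf : AEMeasurable f μ) (hg : AEMeasurable g μ)
    (hfp : Integrable (fun x => |f x| ^ p) μ) (hgp : Integrable (fun x => |g x| ^ p) μ) :
    ∫ x, bregmanRpow p (f x) (g x) ∂μ = (∫ x, |f x| ^ p ∂μ) + (p - 1) * ∫ x, |g x| ^ p ∂μ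
      - p * ∫ x, f x * signedRpow (p - 1) (g x) ∂μ := by
  simp only [bregmanRpow, mul_comm (signedRpow _ _)]
  rw [integral_sub (hfp.fun_add (hgp.const_mul _))
      ((integrable_mul_signedRpow hp hf hg hfp hgp).const_mul p),
    integral_add hfp (hgp.const_mul _), integral_const_mul, integral_const_mul]

/-- The integrated Bregman divergence tends to `N + (p - 1) N - p N = 0`. -/
theorem tendsto_integral_abs_sub_rpow_of_tendsto_integral_mul_signedRpow {ι : Type*}
    {l : Filter ι} (hp : 1 < p) {f g : ι → α → ℝ} {N : ℝ}
    (hf : ∀ k, AEMeasurable (f k) μ) (hg : ∀ k, AEMeasurable (g k) μ)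
    (hfp : ∀ k, Integrable (fun x => |f k x| ^ p) μ)
    (hgp : ∀ k, Integrable (fun x => |g k x| ^ p) μ)
    (hf_norm : Tendsto (fun k => ∫ x, |f k x| ^ p ∂μ) l (𝓝 N))
    (hg_norm : Tendsto (fun k => ∫ x, |g k x| ^ p ∂μ) l (𝓝 N))
    (hfg : Tendsto (fun k => ∫ x, f k x * signedRpow (p - 1) (g k x) ∂μ) l (𝓝 N)) :
    Tendsto (fun k => ∫ x, |f k x - g k x| ^ p ∂μ) l (𝓝 0) := by
  have hD : Tendsto (fun k => ∫ x, bregmanRpow p (f k x) (g k x) ∂μ) l (𝓝 0) := by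
    simp only [integral_bregmanRpow hp (hf _) (hg _) (hfp _) (hgp _)]
    convert (hf_norm.add (hg_norm.const_mul (p - 1))).sub (hfg.const_mul p) using 2
    ring
  refine tendsto_zero_of_forall_le_mul_add
    (fun k => integral_nonneg fun x => Real.rpow_nonneg (abs_nonneg _) p) (hf_norm.add hg_norm) hD
    fun ε hε => ?_
  obtain ⟨C, hC⟩ := exists_abs_sub_rpow_le_bregmanRpow hp hε
  refine ⟨C, fun k => ?_⟩
  have hD_int := integrable_bregmanRpow hp (hf k) (hg k) (hfp k) (hgp k)
  calc ∫ x, |f k x - g k x| ^ p ∂μ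
      ≤ ∫ x, ε * (|f k x| ^ p + |g k x| ^ p) + C * bregmanRpow p (f k x) (g k x) ∂μ :=
        integral_mono_of_nonneg (Eventually.of_forall fun x => Real.rpow_nonneg (abs_nonneg _) p)
          ((((hfp k).add (hgp k)).const_mul ε).add (hD_int.const_mul C))
          (Eventually.of_forall fun x => hC _ _)
    _ = ε * ((∫ x, |f k x| ^ p ∂μ) + ∫ x, |g k x| ^ p ∂μ)
          + C * ∫ x, bregmanRpow p (f k x) (g k x) ∂μ := by
        rw [integral_add (((hfp k).fun_add (hgp k)).const_mul ε) (hD_int.const_mul C),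
          integral_const_mul, integral_const_mul, integral_add (hfp k) (hgp k)]

end Integral

section Periodic

variable {m : ℕ}

lemma Zper.comp {α β : Type*} {g : (Fin m → ℝ) → α} (hg : Zper g) (h : α → β) :
    Zper (h ∘ g) :=
  fun k y => congrArg h (hg k y)

lemma Zper.exists_forall_le {g : (Fin m → ℝ) → ℝ} (hg : Continuous g) (hper : Zper g) :
    ∃ y₀, ∀ y, g y ≤ g y₀ := by
  obtain ⟨y₀, -, hy₀⟩ := (isCompact_Icc (a := (0 : Fin m → ℝ)) (b := 1)).exists_isMaxOn
    ⟨0, le_rfl, zero_le_one⟩ hg.continuousOn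
  refine ⟨y₀, fun y => ?_⟩
  have hfract : (fun i => Int.fract (y i)) ∈ Set.Icc (0 : Fin m → ℝ) 1 :=
    ⟨fun i => Int.fract_nonneg _, fun i => (Int.fract_lt_one _).le⟩
  have hy : g (fun i => Int.fract (y i)) = g y := by
    rw [← hper (fun i => ⌊y i⌋)]
    congr 1
    funext i
    exact Int.fract_add_floor (y i)
  exact hy ▸ hy₀ hfract

lemma Zper.bddAbove_range_abs {g : (Fin m → ℝ) → ℝ} (hg : Continuous g) (hper : Zper g) :
    BddAbove (Set.range fun y => |g y|) :=
  let ⟨y₀, hy₀⟩ := (hper.comp abs).exists_forall_le hg.abs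
  ⟨|g y₀|, Set.forall_mem_range.2 hy₀⟩

lemma Zper.iSup_abs_signedRpow {r : ℝ} (hr : 0 < r) {g : (Fin m → ℝ) → ℝ} (hg : Continuous g)
    (hper : Zper g) : ⨆ y, |signedRpow r (g y)| = (⨆ y, |g y|) ^ r := by
  obtain ⟨y₀, hy₀⟩ := (hper.comp abs).exists_forall_le hg.abs
  have hsup : ⨆ y, |g y| = |g y₀| :=
    ciSup_eq_of_forall_le_of_forall_lt_exists_gt hy₀ fun w hw => ⟨y₀, hw⟩
  rw [hsup]
  refine ciSup_eq_of_forall_le_of_forall_lt_exists_gt (fun y => ?_) fun w hw =>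
    ⟨y₀, by rwa [abs_signedRpow hr.ne']⟩
  rw [abs_signedRpow hr.ne']
  exact Real.rpow_le_rpow (abs_nonneg _) (hy₀ y) hr.le

end Periodic

lemma testFun_signedRpow {n m : ℕ} {p q : ℝ} (hpq : p.HolderConjugate q) {Ω : Set (Fin n → ℝ)}
    {u₀ : (Fin n → ℝ) → (Fin m → ℝ) → ℝ} (hcont : ∀ x, Continuous (u₀ x))
    (hper : ∀ x, Zper (u₀ x)) (hmeas : ∀ y, Measurable fun x => u₀ x y)
    (hLp : Integrable (fun x => (⨆ y, |u₀ x y|) ^ p) (volume.restrict Ω)) :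
    TestFun q Ω fun x y => signedRpow (p - 1) (u₀ x y) := by
  have hp1 : 0 < p - 1 := by linarith [hpq.lt]
  refine ⟨fun x => (continuous_signedRpow hp1).comp (hcont x),
    fun x => (hper x).comp (signedRpow (p - 1)),
    fun y => ((continuous_signedRpow hp1).measurable.comp (hmeas y)).aemeasurable, ?_⟩
  refine hLp.congr (Eventually.of_forall fun x => ?_)
  dsimp only
  rw [Zper.iSup_abs_signedRpow hp1 (hcont x) (hper x),
    ← Real.rpow_mul (Real.iSup_nonneg fun _ => abs_nonneg _), hpq.sub_one_mul_conj]

lemma measurable_comp_of_continuous_of_measurable {α : Type*} [MeasurableSpace α] {m : ℕ}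
    {u₀ : α → (Fin m → ℝ) → ℝ} (hcont : ∀ x, Continuous (u₀ x))
    (hmeas : ∀ y, Measurable fun x => u₀ x y) {σ : α → (Fin m → ℝ)}
    (hσ : Measurable σ) : Measurable fun x => u₀ x (σ x) :=
  (measurable_uncurry_of_continuous_of_measurable (u := fun y x => u₀ x y) hcont hmeas).comp
    (hσ.prodMk measurable_id)

theorem stmt6_general {n m : ℕ} (p q : ℝ) (hp : 1 < p) (hpq : 1 / p + 1 / q = 1)
    (Ω : Set (Fin n → ℝ))
    (R : Matrix (Fin m) (Fin n) ℝ)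
    (η : ℕ → ℝ)
    (u : ℕ → (Fin n → ℝ) → ℝ)
    (hu : ∀ k, AEMeasurable (u k) (volume.restrict Ω))
    (huLp : ∀ k, Integrable (fun x => |u k x| ^ p) (volume.restrict Ω))
    (u₀ : (Fin n → ℝ) → (Fin m → ℝ) → ℝ)
    (hu₀cont : ∀ x, Continuous (u₀ x)) (hu₀per : ∀ x, Zper (u₀ x))
    (hu₀meas : ∀ y, Measurable fun x => u₀ x y)
    (hu₀Lp : Integrable (fun x => (⨆ y, |u₀ x y|) ^ p) (volume.restrict Ω))
    (h2s : WeakTwoScale q Ω R η u u₀)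
    (hnorm : Tendsto (fun k => ∫ x in Ω, |u k x| ^ p) atTop
      (𝓝 (∫ x in Ω, ∫ y in cube m, |u₀ x y| ^ p)))
    (hnorm' : Tendsto (fun k => ∫ x in Ω, |u₀ x ((η k)⁻¹ • R.mulVec x)| ^ p) atTop
      (𝓝 (∫ x in Ω, ∫ y in cube m, |u₀ x y| ^ p))) :
    Tendsto (fun k => ∫ x in Ω, |u k x - u₀ x ((η k)⁻¹ • R.mulVec x)| ^ p) atTop (𝓝 0) := by
  have hpq' : p.HolderConjugate q := Real.holderConjugate_iff.2 ⟨hp, by simpa using hpq⟩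
  have hp0 : 0 ≤ p := by linarith
  have hv : ∀ k, Measurable fun x => u₀ x ((η k)⁻¹ • R.mulVec x) := fun k =>
    measurable_comp_of_continuous_of_measurable hu₀cont hu₀meas (by fun_prop)
  have hvp : ∀ k, Integrable (fun x => |u₀ x ((η k)⁻¹ • R.mulVec x)| ^ p) (volume.restrict Ω) :=
    fun k => hu₀Lp.mono' ((hv k).abs.pow_const p).aestronglyMeasurable
      (Eventually.of_forall fun x => by
        rw [Real.norm_of_nonneg (Real.rpow_nonneg (abs_nonneg _) p)]
        exact Real.rpow_le_rpow (abs_nonneg _)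
          (le_ciSup ((hu₀per x).bddAbove_range_abs (hu₀cont x)) _) hp0)
  have hpairing := h2s _ (testFun_signedRpow hpq' hu₀cont hu₀per hu₀meas hu₀Lp)
  simp only [mul_comm (u₀ _ _) (signedRpow _ _), signedRpow_mul_self (by linarith : 0 < p - 1),
    sub_add_cancel] at hpairing
  exact tendsto_integral_abs_sub_rpow_of_tendsto_integral_mul_signedRpow hp hu
    (fun k => (hv k).aemeasurable) huLp hvp hnorm hnorm' hpairing

/-- corrector in `L^p`: if `u_η ⇀⇀ u₀` weakly, `u₀ ∈ L^p(Ω; C_♯(Y^m))`,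
and both `‖u_η‖_{L^p(Ω)}` and `‖u₀(·, R·/η)‖_{L^p(Ω)}` converge to `‖u₀‖_{L^p(Ω×Y^m)}`,
then `‖u_η − u₀(·, R·/η)‖_{L^p(Ω)} → 0`. -/
theorem stmt6 {n m : ℕ} (p q : ℝ) (hp : 1 < p) (hpq : 1 / p + 1 / q = 1)
    (Ω : Set (Fin n → ℝ)) (hΩo : IsOpen Ω) (hΩb : Bornology.IsBounded Ω)
    (R : Matrix (Fin m) (Fin n) ℝ) (hR : Irr R)
    (η : ℕ → ℝ) (hηpos : ∀ k, 0 < η k) (hη : Tendsto η atTop (𝓝 0))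
    (u : ℕ → (Fin n → ℝ) → ℝ)
    (hu : ∀ k, AEMeasurable (u k) (volume.restrict Ω))
    (huLp : ∀ k, Integrable (fun x => |u k x| ^ p) (volume.restrict Ω))
    (u₀ : (Fin n → ℝ) → (Fin m → ℝ) → ℝ)
    (hu₀cont : ∀ x, Continuous (u₀ x)) (hu₀per : ∀ x, Zper (u₀ x))
    (hu₀meas : ∀ y, Measurable fun x => u₀ x y)
    (hu₀Lp : Integrable (fun x => (⨆ y, |u₀ x y|) ^ p) (volume.restrict Ω))
    (h2s : WeakTwoScale q Ω R η u u₀)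
    (hnorm : Tendsto (fun k => ∫ x in Ω, |u k x| ^ p) atTop
      (𝓝 (∫ x in Ω, ∫ y in cube m, |u₀ x y| ^ p)))
    (hnorm' : Tendsto (fun k => ∫ x in Ω, |u₀ x ((η k)⁻¹ • R.mulVec x)| ^ p) atTop
      (𝓝 (∫ x in Ω, ∫ y in cube m, |u₀ x y| ^ p))) :
    Tendsto (fun k => ∫ x in Ω, |u k x - u₀ x ((η k)⁻¹ • R.mulVec x)| ^ p) atTop (𝓝 0) :=
  stmt6_general p q hp hpq Ω R η u hu huLp u₀ hu₀cont hu₀per hu₀meas hu₀Lp h2s hnorm hnorm'
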